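/- Let n, d, k be positive integers with k ≥ 2. Then there exists a reduced decision rule system S such that n(S) = n + d, k(S) = k, d(S) = d, |S| = 2n + k − 1, and T_AD(S) ≥ 2^n. -/

import Mathlib

/- Common formal framework for decision rule systems and decision trees /
   acyclic decision graphs, following Durdymyradov & Moshkov. -/

attribute [local instance] Classical.propDecidable

noncomputable section

namespace DRS

/-- A decision rule `(a_{i₁}=δ₁) ∧ ⋯ ∧ (a_{i_m}=δ_m) → σ`:
`K` is the finite set of equations (attribute index, value), `rhs` is σ. -/
structure Rule where
  K : Finset (ℕ × ℕ)
  rhs : ℕ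

/-- Well-formedness of a rule: the attributes on its left-hand side are pairwise different. -/
def Rule.WF (r : Rule) : Prop := ∀ p ∈ r.K, ∀ q ∈ r.K, p.1 = q.1 → p = q

/-- A(r): the set of attributes of a rule. -/
def Rule.attrs (r : Rule) : Finset ℕ := r.K.image Prod.fst

/-- The length m of a rule. -/
def Rule.len (r : Rule) : ℕ := r.K.card

/-- A(S) -/
def attrs (S : Finset Rule) : Finset ℕ := S.biUnion Rule.attrs

/-- n(S) -/
def nPar (S : Finset Rule) : ℕ := (attrs S).card

/-- d(S): the maximum length of a rule of S. -/
def dPar (S : Finset Rule) : ℕ := S.sup Rule.len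

/-- D(S): the set of right-hand sides. -/
def rhsSet (S : Finset Rule) : Finset ℕ := S.image Rule.rhs

/-- V_S(a_i) -/
def VS (S : Finset Rule) (i : ℕ) : Finset ℕ :=
  ((S.biUnion Rule.K).filter fun p => p.1 = i).image Prod.snd

/-- k(S) -/
def kPar (S : Finset Rule) : ℕ := (attrs S).sup fun i => (VS S i).card

/-- Attribute values in trees are `Option ℕ`; `none` plays the role of the special value `*`.
`allowed S false i` is (the lift of) `V_S(a_i)`, and `allowed S true i` is `EV_S(a_i)`. -/
def allowed (S : Finset Rule) (ext : Bool) (i : ℕ) : Finset (Option ℕ) :=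
  (VS S i).image some ∪ (if ext then {none} else ∅)

/-- Consistency of an equation system over ω ∪ {*}. -/
def ConsistentE (E : Finset (ℕ × Option ℕ)) : Prop :=
  ∀ p ∈ E, ∀ q ∈ E, p.1 = q.1 → p.2 = q.2

/-- Lift the left-hand side of a rule to an equation system over ω ∪ {*}. -/
def liftK (K : Finset (ℕ × ℕ)) : Finset (ℕ × Option ℕ) :=
  K.image fun p => (p.1, some p.2)

/-- A finite directed labeled graph: the nodes are `0, …, n-1`, with a distinguished root,
each node carries either an attribute (working node) or a set of rules (terminal node),
and edges are labeled with elements of ω ∪ {*}. -/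
structure DGraph where
  n : ℕ
  root : ℕ
  label : ℕ → ℕ ⊕ Finset Rule
  edges : Finset (ℕ × Option ℕ × ℕ)

namespace DGraph

def step (G : DGraph) (u v : ℕ) : Prop := ∃ l, (u, l, v) ∈ G.edges

/-- The graph has no directed cycles. -/
def Acyclic (G : DGraph) : Prop := ∀ v, ¬ Relation.TransGen G.step v v

/-- A node is terminal if no edge leaves it. -/
def IsTerminal (G : DGraph) (v : ℕ) : Prop := ∀ e ∈ G.edges, e.1 ≠ v

/-- The set of rules attached to a (terminal) node. -/
def termSet (G : DGraph) (v : ℕ) : Finset Rule :=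
  Sum.elim (fun _ => (∅ : Finset Rule)) id (G.label v)

/-- `G` is an acyclic decision graph over the rule system `S`;
`ext = false` : branching over `V_S` (o-type), `ext = true` : branching over `EV_S` (e-type).
Terminal nodes are labeled with subsets of S; each working node is labeled with an
attribute `a` of `A(S)` and has exactly one leaving edge for every element of
`V_S(a)` (resp. `EV_S(a)`), the edges leaving it being labeled with these
pairwise different elements. -/
def IsDG (G : DGraph) (S : Finset Rule) (ext : Bool) : Prop :=
  G.root < G.n ∧
  (∀ e ∈ G.edges, e.1 < G.n ∧ e.2.2 < G.n) ∧
  G.Acyclic ∧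
  (∀ v < G.n,
    if G.IsTerminal v then
      ∃ Z : Finset Rule, G.label v = Sum.inr Z ∧ Z ⊆ S
    else
      ∃ a : ℕ, G.label v = Sum.inl a ∧ a ∈ attrs S ∧
        (∀ l : Option ℕ, (∃ w, (v, l, w) ∈ G.edges) ↔ l ∈ allowed S ext a) ∧
        (∀ l w w', (v, l, w) ∈ G.edges → (v, l, w') ∈ G.edges → w = w'))

/-- `G` is a finite directed tree with root: the root has no entering edge and every
other node has exactly one entering edge (together with acyclicity this makes the
graph a rooted tree). -/
def IsTree (G : DGraph) : Prop :=
  (∀ e ∈ G.edges, e.2.2 ≠ G.root) ∧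
  (∀ v < G.n, v ≠ G.root → ∃! e, e ∈ G.edges ∧ e.2.2 = v)

/-- `chainFrom G v p t`: the list `p` of (node, leaving-edge-label) pairs forms a
directed path in `G` starting at `v` and ending at `t`. -/
def chainFrom (G : DGraph) : ℕ → List (ℕ × Option ℕ) → ℕ → Prop
  | v, [], t => v = t
  | v, e :: rest, t => e.1 = v ∧ ∃ w, (v, e.2, w) ∈ G.edges ∧ chainFrom G w rest t

/-- A complete path: from the root to a terminal node; it is recorded by the list of
its working nodes with the labels of the edges taken, together with its terminal node. -/
def IsCompletePath (G : DGraph) (p : List (ℕ × Option ℕ)) (t : ℕ) : Prop :=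
  G.chainFrom G.root p t ∧ G.IsTerminal t ∧ t < G.n

/-- K(ξ): the equation system associated with a complete path. -/
def pathEqs (G : DGraph) (p : List (ℕ × Option ℕ)) : Finset (ℕ × Option ℕ) :=
  (p.filterMap fun e =>
    Sum.elim (fun a => some (a, e.2)) (fun _ => none) (G.label e.1)).toFinset

/-- L(Γ): the number of nodes. -/
def size (G : DGraph) : ℕ := G.n

/-- T(Γ): the number of terminal nodes labeled with pairwise different sets of rules. -/
def tCount (G : DGraph) : ℕ :=
  (((Finset.range G.n).filter fun v => G.IsTerminal v).image fun v => G.termSet v).card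

/-- h(Γ): the maximum number of working nodes on a complete path. -/
def depth (G : DGraph) : ℕ :=
  sSup {m | ∃ p t, G.IsCompletePath p t ∧ p.length = m}

/-- Path conditions for (the solutions of) the problems All Rules / EAll Rules. -/
def SolvesAR (G : DGraph) (S : Finset Rule) : Prop :=
  ∀ p t, G.IsCompletePath p t → ConsistentE (G.pathEqs p) →
    (∀ r ∈ G.termSet t, liftK r.K ⊆ G.pathEqs p) ∧
    (∀ r ∈ S, r ∉ G.termSet t → ¬ ConsistentE (liftK r.K ∪ G.pathEqs p))

/-- Path conditions for the problems All Decisions / EAll Decisions. -/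
def SolvesAD (G : DGraph) (S : Finset Rule) : Prop :=
  ∀ p t, G.IsCompletePath p t → ConsistentE (G.pathEqs p) →
    (∀ r ∈ G.termSet t, liftK r.K ⊆ G.pathEqs p) ∧
    (∀ r ∈ S, r ∉ G.termSet t → r.rhs ∉ (G.termSet t).image Rule.rhs →
      ¬ ConsistentE (liftK r.K ∪ G.pathEqs p))

/-- Path conditions for the problems Some Rules / ESome Rules. -/
def SolvesSR (G : DGraph) (S : Finset Rule) : Prop :=
  ∀ p t, G.IsCompletePath p t → ConsistentE (G.pathEqs p) →
    (∀ r ∈ G.termSet t, liftK r.K ⊆ G.pathEqs p) ∧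
    (G.termSet t = ∅ → ∀ r ∈ S, ¬ ConsistentE (liftK r.K ∪ G.pathEqs p))

end DGraph

/-- Γ is a decision tree over S solving AR(S) (an o-tree). -/
def TreeSolvesAR (S : Finset Rule) (G : DGraph) : Prop :=
  G.IsDG S false ∧ G.IsTree ∧ G.SolvesAR S
/-- Γ is a decision tree over S solving EAR(S) (an e-tree). -/
def TreeSolvesEAR (S : Finset Rule) (G : DGraph) : Prop :=
  G.IsDG S true ∧ G.IsTree ∧ G.SolvesAR S
/-- Γ is a decision tree over S solving AD(S) (an o-tree). -/
def TreeSolvesAD (S : Finset Rule) (G : DGraph) : Prop :=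
  G.IsDG S false ∧ G.IsTree ∧ G.SolvesAD S
/-- Γ is a decision tree over S solving EAD(S) (an e-tree). -/
def TreeSolvesEAD (S : Finset Rule) (G : DGraph) : Prop :=
  G.IsDG S true ∧ G.IsTree ∧ G.SolvesAD S
/-- Γ is a decision tree over S solving SR(S) (an o-tree). -/
def TreeSolvesSR (S : Finset Rule) (G : DGraph) : Prop :=
  G.IsDG S false ∧ G.IsTree ∧ G.SolvesSR S
/-- Γ is a decision tree over S solving ESR(S) (an e-tree). -/
def TreeSolvesESR (S : Finset Rule) (G : DGraph) : Prop :=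
  G.IsDG S true ∧ G.IsTree ∧ G.SolvesSR S

/-- L_AR(S): minimum number of nodes of a decision tree over S solving AR(S). -/
def L_AR (S : Finset Rule) : ℕ := sInf {m | ∃ G : DGraph, TreeSolvesAR S G ∧ G.size = m}
def L_EAR (S : Finset Rule) : ℕ := sInf {m | ∃ G : DGraph, TreeSolvesEAR S G ∧ G.size = m}
def L_AD (S : Finset Rule) : ℕ := sInf {m | ∃ G : DGraph, TreeSolvesAD S G ∧ G.size = m}
def L_EAD (S : Finset Rule) : ℕ := sInf {m | ∃ G : DGraph, TreeSolvesEAD S G ∧ G.size = m}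
def L_SR (S : Finset Rule) : ℕ := sInf {m | ∃ G : DGraph, TreeSolvesSR S G ∧ G.size = m}
def L_ESR (S : Finset Rule) : ℕ := sInf {m | ∃ G : DGraph, TreeSolvesESR S G ∧ G.size = m}

/-- T_AR(S): minimum number of differently-labeled terminal nodes of a decision tree
over S solving AR(S); similarly for the other problems. -/
def T_AR (S : Finset Rule) : ℕ := sInf {m | ∃ G : DGraph, TreeSolvesAR S G ∧ G.tCount = m}
def T_EAR (S : Finset Rule) : ℕ := sInf {m | ∃ G : DGraph, TreeSolvesEAR S G ∧ G.tCount = m}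
def T_AD (S : Finset Rule) : ℕ := sInf {m | ∃ G : DGraph, TreeSolvesAD S G ∧ G.tCount = m}
def T_EAD (S : Finset Rule) : ℕ := sInf {m | ∃ G : DGraph, TreeSolvesEAD S G ∧ G.tCount = m}
def T_SR (S : Finset Rule) : ℕ := sInf {m | ∃ G : DGraph, TreeSolvesSR S G ∧ G.tCount = m}
def T_ESR (S : Finset Rule) : ℕ := sInf {m | ∃ G : DGraph, TreeSolvesESR S G ∧ G.tCount = m}

/-- h_AR(S): minimum depth of a decision tree over S solving AR(S); similarly for the others. -/
def h_AR (S : Finset Rule) : ℕ := sInf {m | ∃ G : DGraph, TreeSolvesAR S G ∧ G.depth = m}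
def h_EAR (S : Finset Rule) : ℕ := sInf {m | ∃ G : DGraph, TreeSolvesEAR S G ∧ G.depth = m}
def h_AD (S : Finset Rule) : ℕ := sInf {m | ∃ G : DGraph, TreeSolvesAD S G ∧ G.depth = m}
def h_EAD (S : Finset Rule) : ℕ := sInf {m | ∃ G : DGraph, TreeSolvesEAD S G ∧ G.depth = m}
def h_SR (S : Finset Rule) : ℕ := sInf {m | ∃ G : DGraph, TreeSolvesSR S G ∧ G.depth = m}
def h_ESR (S : Finset Rule) : ℕ := sInf {m | ∃ G : DGraph, TreeSolvesESR S G ∧ G.depth = m}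

/-- L^DG_SR(S): minimum number of nodes of an acyclic decision graph solving SR(S). -/
def LDG_SR (S : Finset Rule) : ℕ :=
  sInf {m | ∃ G : DGraph, G.IsDG S false ∧ G.SolvesSR S ∧ G.size = m}
/-- L^DG_ESR(S): minimum number of nodes of an acyclic decision graph solving ESR(S). -/
def LDG_ESR (S : Finset Rule) : ℕ :=
  sInf {m | ∃ G : DGraph, G.IsDG S true ∧ G.SolvesSR S ∧ G.size = m}

/-- A node cover of the hypergraph G(S). -/
def IsNodeCover (S : Finset Rule) (B : Finset ℕ) : Prop :=
  B ⊆ attrs S ∧ ∀ r ∈ S, (Rule.attrs r).Nonempty → (Rule.attrs r ∩ B).Nonempty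

/-- β(S): the minimum cardinality of a node cover of the hypergraph G(S). -/
def beta (S : Finset Rule) : ℕ := sInf {c | ∃ B, IsNodeCover S B ∧ B.card = c}

/-- S⁺: the subsystem of S consisting of all rules of length d(S). -/
def Splus (S : Finset Rule) : Finset Rule := S.filter fun r => r.len = dPar S

/-- β⁺(S) = β(S⁺). -/
def betaPlus (S : Finset Rule) : ℕ := beta (Splus S)

/-- The rule r_α : delete from the left-hand side of r all equations belonging to α. -/
def Rule.restrict (r : Rule) (α : Finset (ℕ × Option ℕ)) : Rule :=
  ⟨r.K.filter fun p => (p.1, some p.2) ∉ α, r.rhs⟩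

/-- S_α : the system of the rules r_α for all r ∈ S with K(r) ∪ α consistent. -/
def restrict (S : Finset Rule) (α : Finset (ℕ × Option ℕ)) : Finset Rule :=
  (S.filter fun r => ConsistentE (liftK r.K ∪ α)).image fun r => r.restrict α

/-- E_C(S): consistent equation systems whose attributes are in A(S) and whose
values belong to V_S (ext = false) resp. EV_S (ext = true). -/
def ESys (S : Finset Rule) (ext : Bool) : Set (Finset (ℕ × Option ℕ)) :=
  {α | ConsistentE α ∧ ∀ p ∈ α, p.1 ∈ attrs S ∧ p.2 ∈ allowed S ext p.1}

/-- I_SR(S). -/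
def I_SR (S : Finset Rule) : Finset Rule :=
  if ∃ r ∈ S, r.len = 0 then S.filter fun r => r.len = 0 else S

/-- D₀(S): the right-hand sides of the rules of S of length 0. -/
def D0 (S : Finset Rule) : Finset ℕ := (S.filter fun r => r.len = 0).image Rule.rhs

/-- I_AD(S). -/
def I_AD (S : Finset Rule) : Finset Rule :=
  S.filter fun r => r.len = 0 ∨ r.rhs ∉ D0 S

def betaC (S : Finset Rule) (ext : Bool) : ℕ :=
  sSup {b | ∃ α ∈ ESys S ext, beta (restrict S α) = b}
def betaCplus (S : Finset Rule) (ext : Bool) : ℕ :=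
  sSup {b | ∃ α ∈ ESys S ext, betaPlus (restrict S α) = b}
def betaI (S : Finset Rule) (I : Finset Rule → Finset Rule) : ℕ :=
  sSup {b | ∃ α ∈ ESys S true, beta (I (restrict S α)) = b}
def betaIplus (S : Finset Rule) (I : Finset Rule → Finset Rule) : ℕ :=
  sSup {b | ∃ α ∈ ESys S true, betaPlus (I (restrict S α)) = b}

def beta_AR (S : Finset Rule) : ℕ := betaC S false
def beta_AD (S : Finset Rule) : ℕ := betaC S false
def beta_SR (S : Finset Rule) : ℕ := betaC S false
def beta_EAR (S : Finset Rule) : ℕ := betaC S true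
def beta_ARplus (S : Finset Rule) : ℕ := betaCplus S false
def beta_ADplus (S : Finset Rule) : ℕ := betaCplus S false
def beta_SRplus (S : Finset Rule) : ℕ := betaCplus S false
def beta_EARplus (S : Finset Rule) : ℕ := betaCplus S true
def beta_EAD (S : Finset Rule) : ℕ := betaI S I_AD
def beta_EADplus (S : Finset Rule) : ℕ := betaIplus S I_AD
def beta_ESR (S : Finset Rule) : ℕ := betaI S I_SR
def beta_ESRplus (S : Finset Rule) : ℕ := betaIplus S I_SR

/-- R_SR(S). -/
def R_SR (S : Finset Rule) : Finset Rule :=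
  S.filter fun r => ¬ ∃ r' ∈ S, r'.K ⊂ r.K

/-- R_AD(S). -/
def R_AD (S : Finset Rule) : Finset Rule :=
  S.filter fun r => ¬ ∃ r' ∈ S, r'.K ⊂ r.K ∧ r'.rhs = r.rhs

/-- A reduced decision rule system. -/
def Reduced (S : Finset Rule) : Prop :=
  attrs S ⊆ Finset.range (nPar S + 1) ∧
  rhsSet S ⊆ Finset.range ((rhsSet S).card + 1) ∧
  (∀ i ∈ attrs S, VS S i ⊆ Finset.range (kPar S + 1)) ∧
  1 ≤ dPar S

/-- Length of the binary representation of a natural number. -/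
def bitLen (m : ℕ) : ℕ := max 1 (Nat.size m)

/-- The length of the word "(a⟨i⟩=⟨δ⟩)" encoding one equation. -/
def eqLen (p : ℕ × ℕ) : ℕ := 4 + bitLen p.1 + bitLen p.2

/-- The length of the word encoding one rule (with the "∧" signs and "→"). -/
def Rule.wordLen (r : Rule) : ℕ :=
  (∑ p ∈ r.K, eqLen p) + (r.K.card - 1) + 1 + bitLen r.rhs

/-- size(S): the length of the word representing S (with ";" separating the rules). -/
def sizeS (S : Finset Rule) : ℕ := (∑ r ∈ S, r.wordLen) + (S.card - 1)

/-!
The rules `(a_i = δ) → 2i + δ` (`i < n`, `δ < 2`) are the only rules of the system with their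
right-hand sides. So a tree solving AD(S), on the path answering `a_i = f i` (and `0` on the
other attributes), must report `(a_i = f i) → 2i + f i`, because this rule is compatible with
the path and no other rule shares its decision; and it cannot report `(a_i = 1 - f i) → …`,
which contradicts the path. Hence the `2^n` maps `f : Fin n → Fin 2` reach terminal nodes with
pairwise different labels. Since `T_AD S` is an infimum and `sInf ∅ = 0`, a solving tree must
also be exhibited: the full tree, querying all attributes in turn.
-/

lemma mem_VS_iff {S : Finset Rule} {i v : ℕ} : v ∈ VS S i ↔ ∃ r ∈ S, (i, v) ∈ r.K := by
  simp only [VS, Finset.mem_image, Finset.mem_filter, Finset.mem_biUnion]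
  constructor
  · rintro ⟨⟨i', v'⟩, ⟨⟨r, hr, hp⟩, rfl⟩, rfl⟩
    exact ⟨r, hr, hp⟩
  · rintro ⟨r, hr, hp⟩
    exact ⟨(i, v), ⟨⟨r, hr, hp⟩, rfl⟩, rfl⟩

lemma mem_attrs_iff {S : Finset Rule} {i : ℕ} :
    i ∈ attrs S ↔ ∃ r ∈ S, ∃ v, (i, v) ∈ r.K := by
  simp only [attrs, Rule.attrs, Finset.mem_biUnion, Finset.mem_image]
  constructor
  · rintro ⟨r, hr, ⟨i', v⟩, hp, rfl⟩
    exact ⟨r, hr, v, hp⟩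
  · rintro ⟨r, hr, v, hv⟩
    exact ⟨r, hr, (i, v), hv, rfl⟩

lemma VS_nonempty {S : Finset Rule} {i : ℕ} (h : i ∈ attrs S) : (VS S i).Nonempty := by
  obtain ⟨r, hr, v, hv⟩ := mem_attrs_iff.1 h
  exact ⟨v, mem_VS_iff.2 ⟨r, hr, hv⟩⟩

lemma mem_liftK {K : Finset (ℕ × ℕ)} {a : ℕ} {x : Option ℕ} :
    (a, x) ∈ liftK K ↔ ∃ b, (a, b) ∈ K ∧ x = some b := by
  simp only [liftK, Finset.mem_image, Prod.mk.injEq]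
  constructor
  · rintro ⟨⟨a', b⟩, hb, rfl, rfl⟩
    exact ⟨b, hb, rfl⟩
  · rintro ⟨b, hb, rfl⟩
    exact ⟨(a, b), hb, rfl, rfl⟩

lemma mem_allowed_false {S : Finset Rule} {a : ℕ} {x : Option ℕ} :
    x ∈ allowed S false a ↔ ∃ v ∈ VS S a, x = some v := by
  simp [allowed, eq_comm]

namespace DGraph

variable {G : DGraph}

lemma pathEqs_nil : G.pathEqs [] = ∅ := rfl

lemma pathEqs_cons_of_label_eq_inl {u a : ℕ} (h : G.label u = Sum.inl a)
    (x : Option ℕ) (p : List (ℕ × Option ℕ)) :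
    G.pathEqs ((u, x) :: p) = insert (a, x) (G.pathEqs p) := by
  simp [pathEqs, h]

lemma termSet_subset {S : Finset Rule} {ext : Bool} (hG : G.IsDG S ext) {t : ℕ}
    (ht : t < G.n) (hterm : G.IsTerminal t) : G.termSet t ⊆ S := by
  obtain ⟨Z, hZ, hZS⟩ := by simpa only [if_pos hterm] using hG.2.2.2 t ht
  rwa [termSet, hZ]

lemma SolvesAR.solvesAD {S : Finset Rule} (h : G.SolvesAR S) : G.SolvesAD S :=
  fun p t hp hc => ⟨(h p t hp hc).1, fun r hr hrt _ => (h p t hp hc).2 r hr hrt⟩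

def descendants (G : DGraph) (v : ℕ) : Finset ℕ :=
  (G.edges.image fun e => e.2.2).filter (Relation.TransGen G.step v)

lemma card_descendants_lt (hG : G.Acyclic) {v w : ℕ} (h : G.step v w) :
    (G.descendants w).card < (G.descendants v).card := by
  apply Finset.card_lt_card
  refine Finset.ssubset_iff_of_subset ?_ |>.2
    ⟨w, ?_, fun hw => hG w (Finset.mem_filter.1 hw).2⟩
  · intro u hu
    simp only [descendants, Finset.mem_filter] at hu ⊢
    exact ⟨hu.1, Relation.TransGen.head h hu.2⟩
  · obtain ⟨x, hx⟩ := h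
    exact Finset.mem_filter.2
      ⟨Finset.mem_image.2 ⟨_, hx, rfl⟩, Relation.TransGen.single ⟨x, hx⟩⟩

end DGraph

def assignmentEqs (σ : ℕ → ℕ) : Set (ℕ × Option ℕ) := {q | q.2 = some (σ q.1)}

lemma consistentE_of_subset_assignmentEqs {E : Finset (ℕ × Option ℕ)} {σ : ℕ → ℕ}
    (h : ↑E ⊆ assignmentEqs σ) : ConsistentE E := by
  intro p hp q hq hpq
  rw [h hp, h hq, hpq]

def HasUniqueRhs (S : Finset Rule) (r : Rule) : Prop := ∀ r' ∈ S, r'.rhs = r.rhs → r' = r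

section LowerBound

variable {S : Finset Rule} {G : DGraph} {σ : ℕ → ℕ}

theorem exists_chainFrom_subset_assignmentEqs (hG : G.IsDG S false)
    (hσ : ∀ a ∈ attrs S, σ a ∈ VS S a) (v : ℕ) (hv : v < G.n) :
    ∃ p t, G.chainFrom v p t ∧ G.IsTerminal t ∧ t < G.n ∧
      ↑(G.pathEqs p) ⊆ assignmentEqs σ := by
  by_cases hterm : G.IsTerminal v
  · exact ⟨[], v, rfl, hterm, hv, by simp [DGraph.pathEqs_nil]⟩
  obtain ⟨a, hla, ha, hedges, -⟩ := by simpa only [if_neg hterm] using hG.2.2.2 v hv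
  obtain ⟨w, hw⟩ := (hedges (some (σ a))).2 (mem_allowed_false.2 ⟨σ a, hσ a ha, rfl⟩)
  obtain ⟨p, t, hchain, ht, htn, hp⟩ :=
    exists_chainFrom_subset_assignmentEqs hG hσ w (hG.2.1 _ hw).2
  refine ⟨(v, some (σ a)) :: p, t, ⟨rfl, w, hw, hchain⟩, ht, htn, ?_⟩
  rw [DGraph.pathEqs_cons_of_label_eq_inl hla, Finset.coe_insert]
  exact Set.insert_subset rfl hp
termination_by (G.descendants v).card
decreasing_by exact DGraph.card_descendants_lt hG.2.2.1 ⟨_, hw⟩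

theorem exists_completePath_subset_assignmentEqs (hG : G.IsDG S false)
    (hσ : ∀ a ∈ attrs S, σ a ∈ VS S a) :
    ∃ p t, G.IsCompletePath p t ∧ ↑(G.pathEqs p) ⊆ assignmentEqs σ := by
  obtain ⟨p, t, hchain, ht, htn, hp⟩ := exists_chainFrom_subset_assignmentEqs hG hσ _ hG.1
  exact ⟨p, t, ⟨hchain, ht, htn⟩, hp⟩

theorem mem_termSet_iff_of_solvesAD (hG : G.IsDG S false) (hsol : G.SolvesAD S)
    {p : List (ℕ × Option ℕ)} {t : ℕ} (hpath : G.IsCompletePath p t)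
    (hσ : ↑(G.pathEqs p) ⊆ assignmentEqs σ) {r : Rule} (hr : r ∈ S)
    (huniq : HasUniqueRhs S r) :
    r ∈ G.termSet t ↔ ↑(liftK r.K) ⊆ assignmentEqs σ := by
  obtain ⟨hsub, hcons⟩ := hsol p t hpath (consistentE_of_subset_assignmentEqs hσ)
  refine ⟨fun hrt => (Finset.coe_subset.2 (hsub r hrt)).trans hσ, fun hrσ => ?_⟩
  by_contra hrt
  have hrhs : r.rhs ∉ (G.termSet t).image Rule.rhs := fun h => by
    obtain ⟨r', hr', hr'rhs⟩ := Finset.mem_image.1 h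
    rw [huniq r' (G.termSet_subset hG hpath.2.2 hpath.2.1 hr') hr'rhs] at hr'
    exact hrt hr'
  refine hcons r hr hrt hrhs (consistentE_of_subset_assignmentEqs (σ := σ) ?_)
  rw [Finset.coe_union]
  exact Set.union_subset hrσ hσ

theorem card_le_tCount_of_solvesAD (hG : G.IsDG S false) (hsol : G.SolvesAD S)
    {ι : Type*} [Fintype ι] (σ : ι → ℕ → ℕ)
    (hσ : ∀ x, ∀ a ∈ attrs S, σ x a ∈ VS S a)
    (hsep : ∀ x y, x ≠ y → ∃ r ∈ S, HasUniqueRhs S r ∧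
      ↑(liftK r.K) ⊆ assignmentEqs (σ x) ∧ ¬ ↑(liftK r.K) ⊆ assignmentEqs (σ y)) :
    Fintype.card ι ≤ G.tCount := by
  choose p t hpath hpσ using fun x => exists_completePath_subset_assignmentEqs hG (hσ x)
  rw [← Finset.card_univ]
  refine Finset.card_le_card_of_injOn (fun x => G.termSet (t x)) ?_ ?_
  · intro x _
    exact Finset.mem_image.2
      ⟨t x, Finset.mem_filter.2 ⟨Finset.mem_range.2 (hpath x).2.2, (hpath x).2.1⟩, rfl⟩
  · intro x _ y _ hxy
    by_contra hne
    obtain ⟨r, hr, huniq, hrx, hry⟩ := hsep x y hne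
    have hmem := (mem_termSet_iff_of_solvesAD hG hsol (hpath x) (hpσ x) hr huniq).2 hrx
    exact hry ((mem_termSet_iff_of_solvesAD hG hsol (hpath y) (hpσ y) hr huniq).1
      (by simpa only [hxy] using hmem))

end LowerBound

theorem le_T_AD {S : Finset Rule} {b : ℕ} (hex : ∃ G, TreeSolvesAD S G)
    (h : ∀ G, TreeSolvesAD S G → b ≤ G.tCount) : b ≤ T_AD S := by
  obtain ⟨G, hG⟩ := hex
  exact le_csInf ⟨_, G, hG, rfl⟩ fun m ⟨G', hG', hm⟩ => hm ▸ h G' hG'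

namespace FullTree

variable (S : Finset Rule) (m : ℕ)

/-- A node of the full tree is the list of answers given so far, latest first: the node
`v :: l` is reached from `l` by answering `a_{|l|} = v`. -/
def Valid : List ℕ → Prop
  | [] => True
  | v :: l => v ∈ VS S l.length ∧ Valid l

def level : ℕ → Finset (List ℕ)
  | 0 => {[]}
  | j + 1 => (level j).biUnion fun l => (VS S j).image (· :: l)

def nodes : Finset (List ℕ) := (Finset.range (m + 1)).biUnion (level S)

def nodeEqs : List ℕ → Finset (ℕ × Option ℕ)
  | [] => ∅
  | v :: l => insert (l.length, some v) (nodeEqs l)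

def idx (l : List ℕ) : ℕ :=
  if h : l ∈ nodes S m then (nodes S m).equivFin ⟨l, h⟩ else 0

def decode (v : ℕ) : List ℕ :=
  if h : v < (nodes S m).card then (nodes S m).equivFin.symm ⟨v, h⟩ else []

def nodeLabel (l : List ℕ) : ℕ ⊕ Finset Rule :=
  if l.length < m then Sum.inl l.length else Sum.inr (S.filter fun r => liftK r.K ⊆ nodeEqs l)

def edges : Finset (ℕ × Option ℕ × ℕ) :=
  ((nodes S m).filter fun l => l.length < m).biUnion fun l =>
    (VS S l.length).image fun v => (idx S m l, some v, idx S m (v :: l))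

def tree : DGraph :=
  ⟨(nodes S m).card, idx S m [], fun v => nodeLabel S m (decode S m v), edges S m⟩

variable {S m}

lemma mem_level {j : ℕ} {l : List ℕ} : l ∈ level S j ↔ l.length = j ∧ Valid S l := by
  induction j generalizing l with
  | zero => cases l <;> simp [level, Valid]
  | succ j ih =>
    cases l with
    | nil => simp [level]
    | cons v l =>
      simp only [level, Finset.mem_biUnion, Finset.mem_image, List.cons.injEq, ih, Valid,
        List.length_cons, Nat.add_right_cancel_iff]
      constructor
      · rintro ⟨l', ⟨rfl, hl'⟩, v', hv', rfl, rfl⟩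
        exact ⟨rfl, hv', hl'⟩
      · rintro ⟨rfl, hv, hl⟩
        exact ⟨l, ⟨rfl, hl⟩, v, hv, rfl, rfl⟩

lemma mem_nodes {l : List ℕ} : l ∈ nodes S m ↔ l.length ≤ m ∧ Valid S l := by
  simp [nodes, mem_level]

lemma nil_mem_nodes : [] ∈ nodes S m := mem_nodes.2 ⟨Nat.zero_le _, trivial⟩

lemma cons_mem_nodes {v : ℕ} {l : List ℕ} :
    v :: l ∈ nodes S m ↔ l ∈ nodes S m ∧ l.length < m ∧ v ∈ VS S l.length := by
  simp only [mem_nodes, Valid, List.length_cons, Nat.add_one_le_iff]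
  exact ⟨fun ⟨h, hv, hl⟩ => ⟨⟨h.le, hl⟩, h, hv⟩,
    fun ⟨⟨_, hl⟩, h, hv⟩ => ⟨h, hv, hl⟩⟩

lemma idx_lt {l : List ℕ} (h : l ∈ nodes S m) : idx S m l < (nodes S m).card := by
  simp [idx, h]

lemma decode_idx {l : List ℕ} (h : l ∈ nodes S m) : decode S m (idx S m l) = l := by
  simp [decode, idx, h]

lemma decode_mem {v : ℕ} (h : v < (nodes S m).card) : decode S m v ∈ nodes S m := by
  simp [decode, h]

lemma idx_decode {v : ℕ} (h : v < (nodes S m).card) : idx S m (decode S m v) = v := by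
  simp [decode, idx, h]

lemma idx_inj {l l' : List ℕ} (h : l ∈ nodes S m) (h' : l' ∈ nodes S m) :
    idx S m l = idx S m l' ↔ l = l' :=
  ⟨fun he => by rw [← decode_idx h, he, decode_idx h'], congrArg _⟩

lemma forall_lt_card {P : ℕ → Prop} :
    (∀ v < (nodes S m).card, P v) ↔ ∀ l ∈ nodes S m, P (idx S m l) :=
  ⟨fun h _ hl => h _ (idx_lt hl), fun h _ hv => idx_decode hv ▸ h _ (decode_mem hv)⟩

lemma mem_edges {e : ℕ × Option ℕ × ℕ} :
    e ∈ edges S m ↔ ∃ l ∈ nodes S m, l.length < m ∧ ∃ v ∈ VS S l.length,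
      e = (idx S m l, some v, idx S m (v :: l)) := by
  simp [edges, eq_comm, and_assoc]

lemma mem_edges_idx {l : List ℕ} (hl : l ∈ nodes S m) {x : Option ℕ} {w : ℕ} :
    (idx S m l, x, w) ∈ edges S m ↔
      l.length < m ∧ ∃ v ∈ VS S l.length, x = some v ∧ w = idx S m (v :: l) := by
  simp only [mem_edges, Prod.mk.injEq]
  constructor
  · rintro ⟨l', hl', hlen, v, hv, he, rfl, rfl⟩
    obtain rfl := (idx_inj hl hl').1 he
    exact ⟨hlen, v, hv, rfl, rfl⟩
  · rintro ⟨hlen, v, hv, rfl, rfl⟩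
    exact ⟨l, hl, hlen, v, hv, rfl, rfl, rfl⟩

lemma tree_edges : (tree S m).edges = edges S m := rfl

lemma tree_label_idx {l : List ℕ} (hl : l ∈ nodes S m) :
    (tree S m).label (idx S m l) = nodeLabel S m l := by
  simp only [tree, decode_idx hl]

lemma length_decode_of_step {u w : ℕ} (h : (tree S m).step u w) :
    (decode S m w).length = (decode S m u).length + 1 := by
  obtain ⟨x, he⟩ := h
  obtain ⟨l, hl, hlen, v, hv, he⟩ := mem_edges.1 he
  simp only [Prod.mk.injEq] at he
  obtain ⟨rfl, -, rfl⟩ := he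
  rw [decode_idx hl, decode_idx (cons_mem_nodes.2 ⟨hl, hlen, hv⟩), List.length_cons]

lemma tree_acyclic : (tree S m).Acyclic := by
  have hlt : ∀ u w, Relation.TransGen (tree S m).step u w →
      (decode S m u).length < (decode S m w).length := by
    intro u w h
    induction h with
    | single h => rw [length_decode_of_step h]; omega
    | tail _ h ih => rw [length_decode_of_step h]; omega
  exact fun v h => lt_irrefl _ (hlt v v h)

lemma isTerminal_idx_iff (hattrs : attrs S = Finset.range m) {l : List ℕ}
    (hl : l ∈ nodes S m) :
    (tree S m).IsTerminal (idx S m l) ↔ l.length = m := by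
  have hle := (mem_nodes.1 hl).1
  constructor
  · intro hterm
    by_contra hne
    have hlt : l.length < m := lt_of_le_of_ne hle hne
    obtain ⟨v, hv⟩ := VS_nonempty (hattrs ▸ Finset.mem_range.2 hlt : l.length ∈ attrs S)
    exact hterm _ ((mem_edges_idx hl).2 ⟨hlt, v, hv, rfl, rfl⟩) rfl
  · rintro hlen ⟨u, x, w⟩ he rfl
    have := ((mem_edges_idx hl).1 he).1
    omega

theorem tree_isDG (hattrs : attrs S = Finset.range m) : (tree S m).IsDG S false := by
  refine ⟨idx_lt nil_mem_nodes, ?_, tree_acyclic, forall_lt_card.2 fun l hl => ?_⟩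
  · intro e he
    obtain ⟨l, hl, hlen, v, hv, rfl⟩ := mem_edges.1 he
    exact ⟨idx_lt hl, idx_lt (cons_mem_nodes.2 ⟨hl, hlen, hv⟩)⟩
  rw [tree_label_idx hl, nodeLabel]
  split_ifs with hterm hlt hlt
  · exact absurd ((isTerminal_idx_iff hattrs hl).1 hterm) hlt.ne
  · exact ⟨_, rfl, Finset.filter_subset _ _⟩
  · refine ⟨l.length, rfl, hattrs ▸ Finset.mem_range.2 hlt, fun x => ?_, ?_⟩
    · simp only [tree_edges, mem_edges_idx hl, mem_allowed_false, hlt, true_and]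
      exact ⟨fun ⟨_, v, hv, hx, _⟩ => ⟨v, hv, hx⟩,
        fun ⟨v, hv, hx⟩ => ⟨_, v, hv, hx, rfl⟩⟩
    · simp only [tree_edges]
      intro x w w' hw hw'
      obtain ⟨-, v, -, rfl, rfl⟩ := (mem_edges_idx hl).1 hw
      obtain ⟨-, v', -, hvv', rfl⟩ := (mem_edges_idx hl).1 hw'
      rw [Option.some_inj.1 hvv']
  · have := (mem_nodes.1 hl).1
    exact absurd ((isTerminal_idx_iff hattrs hl).2 (by omega)) hterm

theorem tree_isTree : (tree S m).IsTree := by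
  refine ⟨fun e he hroot => ?_, forall_lt_card.2 fun l hl hne => ?_⟩
  · obtain ⟨l, hl, hlen, v, hv, rfl⟩ := mem_edges.1 he
    exact List.cons_ne_nil v l
      ((idx_inj (cons_mem_nodes.2 ⟨hl, hlen, hv⟩) nil_mem_nodes).1 hroot)
  obtain ⟨v, l', rfl⟩ := List.exists_cons_of_ne_nil (l := l) fun h => hne (by rw [h]; rfl)
  obtain ⟨hl', hlen, hv⟩ := cons_mem_nodes.1 hl
  refine ⟨(idx S m l', some v, idx S m (v :: l')),
    ⟨(mem_edges_idx hl').2 ⟨hlen, v, hv, rfl, rfl⟩, rfl⟩, ?_⟩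
  rintro e ⟨he, hin⟩
  obtain ⟨l'', hl'', hlen'', v'', hv'', rfl⟩ := mem_edges.1 he
  obtain ⟨rfl, rfl⟩ :=
    List.cons_eq_cons.1 ((idx_inj (cons_mem_nodes.2 ⟨hl'', hlen'', hv''⟩) hl).1 hin)
  rfl

lemma exists_mem_nodeEqs {l : List ℕ} {a : ℕ} (ha : a < l.length) :
    ∃ c, (a, some c) ∈ nodeEqs l := by
  induction l with
  | nil => exact absurd ha (Nat.not_lt_zero a)
  | cons v l ih =>
    rcases Nat.lt_succ_iff_lt_or_eq.1 ha with ha | rfl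
    · obtain ⟨c, hc⟩ := ih ha
      exact ⟨c, Finset.mem_insert_of_mem hc⟩
    · exact ⟨v, Finset.mem_insert_self _ _⟩

lemma pathEqs_union_nodeEqs {p : List (ℕ × Option ℕ)} {l : List ℕ} {t : ℕ}
    (hl : l ∈ nodes S m) (hp : (tree S m).chainFrom (idx S m l) p t) :
    (tree S m).pathEqs p ∪ nodeEqs l = nodeEqs (decode S m t) := by
  induction p generalizing l with
  | nil =>
    rw [← show idx S m l = t from hp, decode_idx hl, DGraph.pathEqs_nil, Finset.empty_union]
  | cons e p ih =>
    obtain ⟨u, x⟩ := e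
    obtain ⟨rfl, w, hw, hp⟩ := hp
    obtain ⟨hlen, v, hv, rfl, rfl⟩ := (mem_edges_idx hl).1 hw
    have hlabel : (tree S m).label (idx S m l) = Sum.inl l.length := by
      rw [tree_label_idx hl, nodeLabel, if_pos hlen]
    rw [DGraph.pathEqs_cons_of_label_eq_inl hlabel, Finset.insert_union, ← Finset.union_insert,
      ← ih (cons_mem_nodes.2 ⟨hl, hlen, hv⟩) hp]
    rfl

theorem tree_solvesAR (hattrs : attrs S = Finset.range m) : (tree S m).SolvesAR S := by
  rintro p t ⟨hchain, htermt, ht⟩ -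
  set L := decode S m t
  have hL : L ∈ nodes S m := decode_mem ht
  have hpath : (tree S m).pathEqs p = nodeEqs L := by
    simpa [nodeEqs] using pathEqs_union_nodeEqs nil_mem_nodes hchain
  have hlen : L.length = m := (isTerminal_idx_iff hattrs hL).1 (by rwa [idx_decode ht])
  have htermSet : (tree S m).termSet t = S.filter fun r => liftK r.K ⊆ nodeEqs L := by
    simp [DGraph.termSet, tree, nodeLabel, L, hlen]
  rw [htermSet, hpath]
  refine ⟨fun r hr => (Finset.mem_filter.1 hr).2, fun r hr hrt hcons => hrt ?_⟩
  refine Finset.mem_filter.2 ⟨hr, fun q hq => ?_⟩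
  obtain ⟨a, x⟩ := q
  obtain ⟨b, hb, rfl⟩ := mem_liftK.1 hq
  have ha : a < L.length := by
    rw [hlen, ← Finset.mem_range, ← hattrs]
    exact mem_attrs_iff.2 ⟨r, hr, b, hb⟩
  obtain ⟨c, hc⟩ := exists_mem_nodeEqs ha
  have hbc : some b = some c :=
    hcons _ (Finset.mem_union_left _ hq) _ (Finset.mem_union_right _ hc) rfl
  rwa [hbc]

theorem exists_treeSolvesAD (hattrs : attrs S = Finset.range m) : ∃ G, TreeSolvesAD S G :=
  ⟨tree S m, tree_isDG hattrs, tree_isTree, (tree_solvesAR hattrs).solvesAD⟩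

end FullTree

namespace HardSystem

def shortRule (i δ : ℕ) : Rule := ⟨{(i, δ)}, 2 * i + δ⟩

def zeroEqs (n e : ℕ) : Finset (ℕ × ℕ) := (Finset.range e).image fun t => (n + t, 0)

def padRule (n d : ℕ) : Rule := ⟨zeroEqs n d, 2 * n⟩

def valueRule (n d j : ℕ) : Rule := ⟨insert (0, j + 2) (zeroEqs n (d - 1)), 2 * n⟩

/-- The short rules `(a_i = δ) → 2i + δ` carry the lower bound. The long rules, all with the
same right-hand side `2n`, only adjust the parameters: `padRule` brings in the attributes
`a_n, …, a_{n+d-1}` and a rule of length `d`, the rules `valueRule` give `a_0` the extra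
values `2, …, k - 1`. -/
def hardSys (n d k : ℕ) : Finset Rule :=
  (Finset.range n ×ˢ Finset.range 2).image (fun p => shortRule p.1 p.2) ∪
    insert (padRule n d) ((Finset.range (k - 2)).image (valueRule n d))

variable {n d k : ℕ}

lemma mem_zeroEqs {e a b : ℕ} : (a, b) ∈ zeroEqs n e ↔ ∃ t < e, a = n + t ∧ b = 0 := by
  simp [zeroEqs, eq_comm]

lemma card_zeroEqs (e : ℕ) : (zeroEqs n e).card = e := by
  rw [zeroEqs, Finset.card_image_of_injective _ fun s t h => by simpa using h, Finset.card_range]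

lemma zero_notMem_zeroEqs (hn : 0 < n) (v e : ℕ) : (0, v) ∉ zeroEqs n e := by
  rw [mem_zeroEqs]
  omega

lemma mem_hardSys {r : Rule} :
    r ∈ hardSys n d k ↔ (∃ i < n, ∃ δ < 2, r = shortRule i δ) ∨ r = padRule n d ∨
      ∃ j < k - 2, r = valueRule n d j := by
  simp only [hardSys, Finset.mem_union, Finset.mem_insert, Finset.mem_image,
    Finset.mem_product, Finset.mem_range, Prod.exists]
  grind

lemma mem_K_shortRule {i δ a b : ℕ} : (a, b) ∈ (shortRule i δ).K ↔ a = i ∧ b = δ := by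
  simp [shortRule]

lemma mem_K_padRule {a b : ℕ} : (a, b) ∈ (padRule n d).K ↔ ∃ t < d, a = n + t ∧ b = 0 :=
  mem_zeroEqs

lemma mem_K_valueRule {j a b : ℕ} :
    (a, b) ∈ (valueRule n d j).K ↔
      (a = 0 ∧ b = j + 2) ∨ ∃ t < d - 1, a = n + t ∧ b = 0 := by
  simp only [valueRule, Finset.mem_insert, Prod.mk.injEq, mem_zeroEqs]

lemma wf_of_mem_hardSys (hn : 0 < n) {r : Rule} (hr : r ∈ hardSys n d k) : r.WF := by
  intro ⟨a, b⟩ hab ⟨a', b'⟩ hab' (h : a = a')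
  subst h
  rcases mem_hardSys.1 hr with ⟨i, -, δ, -, rfl⟩ | rfl | ⟨j, -, rfl⟩
  · rw [mem_K_shortRule] at hab hab'
    rw [hab.2, hab'.2]
  · obtain ⟨-, -, -, rfl⟩ := mem_K_padRule.1 hab
    obtain ⟨-, -, -, rfl⟩ := mem_K_padRule.1 hab'
    rfl
  · rcases mem_K_valueRule.1 hab with ⟨ha, rfl⟩ | ⟨t, -, ha, rfl⟩ <;>
      rcases mem_K_valueRule.1 hab' with ⟨ha', rfl⟩ | ⟨t', -, ha', rfl⟩
    · rfl
    · omega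
    · omega
    · rfl

lemma mem_VS_hardSys {i v : ℕ} :
    v ∈ VS (hardSys n d k) i ↔ (i < n ∧ v < 2) ∨ (n ≤ i ∧ i < n + d ∧ v = 0) ∨
      (i = 0 ∧ 2 ≤ v ∧ v < k) := by
  rw [mem_VS_iff]
  constructor
  · rintro ⟨r, hr, hiv⟩
    rcases mem_hardSys.1 hr with ⟨i', hi', δ, hδ, rfl⟩ | rfl | ⟨j, hj, rfl⟩
    · rw [mem_K_shortRule] at hiv; omega
    · obtain ⟨t, ht, rfl, rfl⟩ := mem_K_padRule.1 hiv; omega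
    · rcases mem_K_valueRule.1 hiv with ⟨rfl, rfl⟩ | ⟨t, ht, rfl, rfl⟩ <;> omega
  · rintro (⟨hi, hv⟩ | ⟨hi, hi', rfl⟩ | ⟨rfl, hv, hv'⟩)
    · exact ⟨_, mem_hardSys.2 (Or.inl ⟨i, hi, v, hv, rfl⟩),
        mem_K_shortRule.2 ⟨rfl, rfl⟩⟩
    · exact ⟨_, mem_hardSys.2 (Or.inr (Or.inl rfl)),
        mem_K_padRule.2 ⟨i - n, by omega, by omega, rfl⟩⟩
    · exact ⟨_, mem_hardSys.2 (Or.inr (Or.inr ⟨v - 2, by omega, rfl⟩)),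
        mem_K_valueRule.2 (Or.inl ⟨rfl, by omega⟩)⟩

lemma attrs_hardSys (hn : 0 < n) : attrs (hardSys n d k) = Finset.range (n + d) := by
  ext i
  rw [Finset.mem_range]
  constructor
  · intro hi
    obtain ⟨v, hv⟩ := VS_nonempty hi
    rw [mem_VS_hardSys] at hv
    omega
  · intro hi
    have h0 : 0 ∈ VS (hardSys n d k) i := mem_VS_hardSys.2 (by omega)
    obtain ⟨r, hr, hir⟩ := mem_VS_iff.1 h0
    exact mem_attrs_iff.2 ⟨r, hr, 0, hir⟩

lemma VS_hardSys_eq_range (hn : 0 < n) (hk : 2 ≤ k) {i : ℕ} (hi : i < n + d) :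
    VS (hardSys n d k) i = Finset.range (if i = 0 then k else if i < n then 2 else 1) := by
  ext v
  rw [mem_VS_hardSys, Finset.mem_range]
  split_ifs <;> omega

lemma kPar_hardSys (hn : 0 < n) (hk : 2 ≤ k) : kPar (hardSys n d k) = k := by
  refine le_antisymm (Finset.sup_le fun i hi => ?_) ?_
  · rw [attrs_hardSys hn, Finset.mem_range] at hi
    rw [VS_hardSys_eq_range hn hk hi, Finset.card_range]
    split_ifs <;> omega
  · have h0 : 0 ∈ attrs (hardSys n d k) := by rw [attrs_hardSys hn]; simp [hn]
    calc k = (VS (hardSys n d k) 0).card := by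
          rw [VS_hardSys_eq_range hn hk (by omega), if_pos rfl, Finset.card_range]
      _ ≤ kPar (hardSys n d k) :=
          Finset.le_sup (f := fun i => (VS (hardSys n d k) i).card) h0

lemma len_shortRule (i δ : ℕ) : (shortRule i δ).len = 1 := rfl

lemma len_padRule : (padRule n d).len = d := card_zeroEqs d

lemma len_valueRule (hn : 0 < n) (hd : 0 < d) (j : ℕ) : (valueRule n d j).len = d := by
  rw [Rule.len, valueRule, Finset.card_insert_of_notMem (zero_notMem_zeroEqs hn _ _),
    card_zeroEqs]
  omega

lemma padRule_mem_hardSys : padRule n d ∈ hardSys n d k :=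
  mem_hardSys.2 (Or.inr (Or.inl rfl))

lemma dPar_hardSys (hn : 0 < n) (hd : 0 < d) : dPar (hardSys n d k) = d := by
  refine le_antisymm (Finset.sup_le fun r hr => ?_) ?_
  · rcases mem_hardSys.1 hr with ⟨i, -, δ, -, rfl⟩ | rfl | ⟨j, -, rfl⟩
    · rw [len_shortRule]; omega
    · rw [len_padRule]
    · rw [len_valueRule hn hd]
  · exact len_padRule.symm.le.trans (Finset.le_sup padRule_mem_hardSys)

lemma rhsSet_hardSys : rhsSet (hardSys n d k) = Finset.range (2 * n + 1) := by
  ext x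
  simp only [rhsSet, Finset.mem_image, Finset.mem_range]
  constructor
  · rintro ⟨r, hr, rfl⟩
    rcases mem_hardSys.1 hr with ⟨i, hi, δ, hδ, rfl⟩ | rfl | ⟨j, -, rfl⟩
    · show 2 * i + δ < 2 * n + 1; omega
    · show 2 * n < 2 * n + 1; omega
    · show 2 * n < 2 * n + 1; omega
  · intro hx
    rcases Nat.lt_or_ge x (2 * n) with h | h
    · refine ⟨_, mem_hardSys.2 (Or.inl ⟨x / 2, by omega, x % 2, by omega, rfl⟩), ?_⟩
      simp only [shortRule]
      omega
    · exact ⟨_, padRule_mem_hardSys, by simp only [padRule]; omega⟩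

lemma valueRule_injective (hn : 0 < n) : Function.Injective (valueRule n d) := fun j j' h => by
  have h0 : (0, j + 2) ∈ (valueRule n d j').K := h ▸ Finset.mem_insert_self _ _
  rcases mem_K_valueRule.1 h0 with ⟨-, h0⟩ | ⟨t, -, h0, -⟩ <;> omega

lemma valueRule_ne_padRule (hn : 0 < n) (j : ℕ) : valueRule n d j ≠ padRule n d := fun h => by
  have h0 : (0, j + 2) ∈ (padRule n d).K := h ▸ Finset.mem_insert_self _ _
  obtain ⟨t, -, h0, -⟩ := mem_K_padRule.1 h0
  omega

lemma card_hardSys (hn : 0 < n) (hk : 2 ≤ k) : (hardSys n d k).card = 2 * n + k - 1 := by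
  have hshort : Set.InjOn (fun p : ℕ × ℕ => shortRule p.1 p.2)
      ↑(Finset.range n ×ˢ Finset.range 2) := by
    rintro ⟨i, δ⟩ hp ⟨i', δ'⟩ hp' h
    have := congrArg Rule.rhs h
    simp only [Finset.coe_product, Set.mem_prod, Finset.coe_range, Set.mem_Iio] at hp hp'
    simp only [shortRule] at this
    rw [Prod.mk.injEq]
    omega
  have hpad : padRule n d ∉ (Finset.range (k - 2)).image (valueRule n d) := by
    simpa only [Finset.mem_image, not_exists, not_and] using
      fun j _ => valueRule_ne_padRule hn j
  have hdisj : Disjoint ((Finset.range n ×ˢ Finset.range 2).image fun p => shortRule p.1 p.2)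
      (insert (padRule n d) ((Finset.range (k - 2)).image (valueRule n d))) := by
    rw [Finset.disjoint_left]
    rintro r hr hr'
    obtain ⟨⟨i, δ⟩, hp, rfl⟩ := Finset.mem_image.1 hr
    simp only [Finset.mem_product, Finset.mem_range] at hp
    have hrhs : (shortRule i δ).rhs = 2 * n := by
      rcases Finset.mem_insert.1 hr' with h | h
      · rw [h]; rfl
      · obtain ⟨j, -, hj⟩ := Finset.mem_image.1 h
        rw [← hj]; rfl
    simp only [shortRule] at hrhs
    omega
  rw [hardSys, Finset.card_union_of_disjoint hdisj, Finset.card_insert_of_notMem hpad,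
    Finset.card_image_of_injOn hshort, Finset.card_image_of_injective _ (valueRule_injective hn),
    Finset.card_product, Finset.card_range, Finset.card_range, Finset.card_range]
  omega

lemma nPar_hardSys (hn : 0 < n) : nPar (hardSys n d k) = n + d := by
  rw [nPar, attrs_hardSys hn, Finset.card_range]

lemma reduced_hardSys (hn : 0 < n) (hd : 0 < d) (hk : 2 ≤ k) : Reduced (hardSys n d k) := by
  refine ⟨?_, ?_, fun i hi => ?_, ?_⟩
  · rw [nPar_hardSys hn, attrs_hardSys hn]
    exact Finset.range_subset_range.2 (Nat.le_succ _)
  · rw [rhsSet_hardSys, Finset.card_range]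
    exact Finset.range_subset_range.2 (Nat.le_succ _)
  · rw [attrs_hardSys hn, Finset.mem_range] at hi
    rw [VS_hardSys_eq_range hn hk hi, kPar_hardSys hn hk]
    exact Finset.range_subset_range.2 (by split_ifs <;> omega)
  · rw [dPar_hardSys hn hd]
    exact hd

lemma hasUniqueRhs_shortRule {i δ : ℕ} (hi : i < n) (hδ : δ < 2) :
    HasUniqueRhs (hardSys n d k) (shortRule i δ) := by
  intro r hr hrhs
  rcases mem_hardSys.1 hr with ⟨i', -, δ', hδ', rfl⟩ | rfl | ⟨j, -, rfl⟩ <;>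
    simp only [shortRule, padRule, valueRule] at hrhs
  · obtain ⟨rfl, rfl⟩ : i' = i ∧ δ' = δ := by omega
    rfl
  all_goals omega

def assignment (f : Fin n → Fin 2) (a : ℕ) : ℕ := if h : a < n then f ⟨a, h⟩ else 0

theorem two_pow_le_tCount (hn : 0 < n) {G : DGraph} (hG : G.IsDG (hardSys n d k) false)
    (hsol : G.SolvesAD (hardSys n d k)) : 2 ^ n ≤ G.tCount := by
  have hcard := card_le_tCount_of_solvesAD hG hsol (assignment (n := n)) ?_ ?_
  · simpa using hcard
  · intro f a ha
    rw [attrs_hardSys hn, Finset.mem_range] at ha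
    rw [mem_VS_hardSys, assignment]
    split_ifs with h
    · exact Or.inl ⟨h, (f _).2⟩
    · exact Or.inr (Or.inl ⟨not_lt.1 h, ha, rfl⟩)
  · intro f g hfg
    obtain ⟨i, hi⟩ := Function.ne_iff.1 hfg
    refine ⟨shortRule i (f i), mem_hardSys.2 (Or.inl ⟨i, i.2, f i, (f i).2, rfl⟩),
      hasUniqueRhs_shortRule i.2 (f i).2, ?_, ?_⟩
    · simp [shortRule, liftK, assignmentEqs, assignment]
    · simp only [liftK, shortRule, Finset.image_singleton, Finset.coe_singleton, assignmentEqs,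
        assignment, Set.singleton_subset_iff, Set.mem_ofPred_eq, Fin.is_lt, ↓reduceDIte, Fin.eta,
        Option.some.injEq]
      exact fun h => hi (Fin.ext h)

end HardSystem

/-- Lemma 11(b): for positive n, d, k with k ≥ 2 there is a reduced system S with
n(S) = n + d, k(S) = k, d(S) = d, |S| = 2n + k − 1 and T_AD(S) ≥ 2^n. -/
theorem statement_5 (n d k : ℕ) (hn : 0 < n) (hd : 0 < d) (hk : 2 ≤ k) :
    ∃ S : Finset Rule, S.Nonempty ∧ (∀ r ∈ S, r.WF) ∧ Reduced S ∧
      nPar S = n + d ∧ kPar S = k ∧ dPar S = d ∧ S.card = 2 * n + k - 1 ∧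
      2 ^ n ≤ T_AD S := by
  open HardSystem in
  refine ⟨hardSys n d k, ⟨_, padRule_mem_hardSys⟩, fun _ => wf_of_mem_hardSys hn,
    reduced_hardSys hn hd hk, nPar_hardSys hn, kPar_hardSys hn hk, dPar_hardSys hn hd,
    card_hardSys hn hk, ?_⟩
  exact le_T_AD (FullTree.exists_treeSolvesAD (attrs_hardSys hn))
    fun G hG => two_pow_le_tCount hn hG.1 hG.2.2

end DRS

end
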